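/- Let 0 < q < 1, c ∈ R^×, n ∈ Z≥0. On C^{n+1} with orthonormal basis e_0,...,e_n, define z e_k = c q^{-n+2k} e_k, and let v, w = v* be the unique operators with v e_0 = 0 such that the relations zw = q²wz, vz = q²zv, q^{-2}vw = −D + qTz − q²z², q^{-2}wv = −D + q^{-1}Tz − q^{-2}z² hold, where T = c(q^{n+1} + q^{-n-1}) and D = c². Then this defines an irreducible *-representation of O_q(H(2)) (i.e. such operators v, w exist, the relations are satisfied, and the commutant is trivial). -/

import Mathlib

/-!
The representation is realised by a diagonal `z` with eigenvalues `λ_k = c q^{2k-n}` and a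
weighted shift `w e_k = γ_k e_{k+1}`. Since `λ_{k+1} = q² λ_k`, the commutation relations hold
for any weights, and `v w`, `w v` are diagonal, so the two quadratic relations become scalar
identities. The right-hand side of the first one, `-c² + qTλ - q²λ²`, factors as
`(qλ - c q^{n+1}) (c q^{-n-1} - qλ)`: it is positive at `λ_0, …, λ_{n-1}` and vanishes at `λ_n`,
which lets us take `γ_k = q √(-c² + qTλ_k - q²λ_k²) > 0`; the second relation follows from the
first after the substitution `λ ↦ q² λ`, together with its vanishing at `λ_0`.
Irreducibility: an operator commuting with `z`, whose eigenvalues are distinct, is diagonal, and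
commuting with a weighted shift with nonzero weights forces the diagonal to be constant.
-/

open Matrix

namespace Matrix

variable {R : Type*} {n : ℕ}

/-- `weightedShift γ` sends `e_j` to `γ j • e_{j+1}` for `j < n` and `e_n` to `0`. -/
def weightedShift [Zero R] (γ : Fin n → R) : Matrix (Fin (n + 1)) (Fin (n + 1)) R :=
  of fun i j => if h : (i : ℕ) = j + 1 then γ ⟨j, by omega⟩ else 0

section Zero

variable [Zero R] (γ : Fin n → R)

@[simp]
lemma weightedShift_zero_left (j : Fin (n + 1)) : weightedShift γ 0 j = 0 := by
  simp [weightedShift]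

lemma weightedShift_succ_left (k : Fin n) (j : Fin (n + 1)) :
    weightedShift γ k.succ j = if j = k.castSucc then γ k else 0 := by
  rcases eq_or_ne j k.castSucc with rfl | hj
  · simp [weightedShift]
  · rw [if_neg hj, weightedShift, of_apply, dif_neg]
    simpa [Fin.ext_iff, eq_comm] using hj

@[simp]
lemma weightedShift_last_right (i : Fin (n + 1)) : weightedShift γ i (Fin.last n) = 0 :=
  dif_neg (by simp only [Fin.val_last]; omega)

lemma weightedShift_castSucc_right (i : Fin (n + 1)) (k : Fin n) :
    weightedShift γ i k.castSucc = if i = k.succ then γ k else 0 := by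
  simp only [weightedShift, of_apply, Fin.val_castSucc, Fin.ext_iff, Fin.val_succ]
  split_ifs <;> rfl

end Zero

lemma diagonal_mul_weightedShift [CommSemiring R] {d : Fin (n + 1) → R} {γ : Fin n → R} {a : R}
    (hd : ∀ k : Fin n, d k.succ = a * d k.castSucc) :
    diagonal d * weightedShift γ = a • (weightedShift γ * diagonal d) := by
  ext i j
  rw [diagonal_mul, smul_apply, mul_diagonal, smul_eq_mul]
  induction i using Fin.cases with
  | zero => simp
  | succ k =>
    rw [weightedShift_succ_left]
    split_ifs with h
    · rw [h, hd]; ring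
    · simp

lemma conjTranspose_weightedShift_mul_self [Semiring R] [StarRing R] {γ : Fin n → R}
    {f : Fin (n + 1) → R} (hlast : f (Fin.last n) = 0)
    (hf : ∀ k : Fin n, f k.castSucc = star (γ k) * γ k) :
    (weightedShift γ)ᴴ * weightedShift γ = diagonal f := by
  ext i j
  simp only [mul_apply, conjTranspose_apply]
  induction i using Fin.lastCases with
  | last => simp [diagonal_apply, hlast]
  | cast k =>
    simp only [weightedShift_castSucc_right, apply_ite star, star_zero, ite_mul, zero_mul,
      Finset.sum_ite_eq', Finset.mem_univ, if_true, weightedShift_succ_left, diagonal_apply]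
    rcases eq_or_ne j k.castSucc with rfl | hj
    · simp [hf]
    · simp [hj, hj.symm]

lemma weightedShift_mul_conjTranspose_self [Semiring R] [StarRing R] {γ : Fin n → R}
    {f : Fin (n + 1) → R} (hzero : f 0 = 0)
    (hf : ∀ k : Fin n, f k.succ = γ k * star (γ k)) :
    weightedShift γ * (weightedShift γ)ᴴ = diagonal f := by
  ext i j
  simp only [mul_apply, conjTranspose_apply]
  induction i using Fin.cases with
  | zero => simp [diagonal_apply, hzero]
  | succ k =>
    simp only [weightedShift_succ_left, ite_mul, zero_mul,
      Finset.sum_ite_eq', Finset.mem_univ, if_true, weightedShift_castSucc_right, diagonal_apply]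
    rcases eq_or_ne j k.succ with rfl | hj
    · simp [hf]
    · simp [hj, hj.symm]

lemma conjTranspose_weightedShift_mulVec_single_zero [Semiring R] [StarRing R] (γ : Fin n → R) :
    (weightedShift γ)ᴴ *ᵥ Pi.single 0 1 = 0 := by
  ext i
  simp

lemma eq_diagonal_of_commute_diagonal {ι : Type*} [Fintype ι] [DecidableEq ι] [CommRing R]
    [NoZeroDivisors R] {M : Matrix ι ι R} {d : ι → R} (hd : Function.Injective d)
    (h : Commute M (diagonal d)) : M = diagonal fun i => M i i := by
  ext i j
  rcases eq_or_ne i j with rfl | hij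
  · simp
  · have hij' := congrFun (congrFun h.eq i) j
    rw [mul_diagonal, diagonal_mul] at hij'
    have : (d j - d i) * M i j = 0 := by linear_combination hij'
    simpa [diagonal_apply_ne _ hij, sub_eq_zero, hd.ne hij.symm] using this

lemma diagonal_eq_smul_one_of_commute_weightedShift [CommRing R] [NoZeroDivisors R]
    {m : Fin (n + 1) → R} {γ : Fin n → R} (hγ : ∀ k, γ k ≠ 0)
    (h : Commute (diagonal m) (weightedShift γ)) : diagonal m = m 0 • 1 := by
  have hstep (k : Fin n) : m k.succ = m k.castSucc := by
    have := congrFun (congrFun h.eq k.succ) k.castSucc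
    rw [diagonal_mul, mul_diagonal, weightedShift_succ_left, if_pos rfl, mul_comm] at this
    exact mul_left_cancel₀ (hγ k) this
  have hconst (i : Fin (n + 1)) : m i = m 0 := by
    induction i using Fin.induction with
    | zero => rfl
    | succ k ih => rw [hstep, ih]
  rw [smul_one_eq_diagonal]
  exact congrArg diagonal (funext hconst)

section EuclideanCLM

variable {𝕜 ι : Type*} [RCLike 𝕜] [Fintype ι] [DecidableEq ι]

lemma toEuclideanCLM_apply_single (A : Matrix ι ι 𝕜) (k : ι) :
    toEuclideanCLM (𝕜 := 𝕜) A (EuclideanSpace.single k 1) = WithLp.toLp 2 (A *ᵥ Pi.single k 1) :=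
  rfl

lemma toEuclideanCLM_diagonal_single (d : ι → 𝕜) (k : ι) :
    toEuclideanCLM (𝕜 := 𝕜) (diagonal d) (EuclideanSpace.single k 1) =
      d k • EuclideanSpace.single k 1 := by
  ext j
  simp [Pi.single_apply]

end EuclideanCLM

lemma exists_eq_smul_one_of_commute_toEuclideanCLM {𝕜 : Type*} [RCLike 𝕜] {d : Fin (n + 1) → 𝕜}
    {γ : Fin n → 𝕜} (hd : Function.Injective d) (hγ : ∀ k, γ k ≠ 0)
    {B : EuclideanSpace 𝕜 (Fin (n + 1)) →L[𝕜] EuclideanSpace 𝕜 (Fin (n + 1))}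
    (hBd : Commute B (toEuclideanCLM (𝕜 := 𝕜) (diagonal d)))
    (hBγ : Commute B (toEuclideanCLM (𝕜 := 𝕜) (weightedShift γ))) : ∃ μ : 𝕜, B = μ • 1 := by
  set M := (toEuclideanCLM (𝕜 := 𝕜)).symm B
  have hMd : Commute M (diagonal d) := by simpa [M] using hBd.map (toEuclideanCLM (𝕜 := 𝕜)).symm
  have hMγ : Commute M (weightedShift γ) := by
    simpa [M] using hBγ.map (toEuclideanCLM (𝕜 := 𝕜)).symm
  have hdiag := eq_diagonal_of_commute_diagonal hd hMd
  have hM : M = M 0 0 • 1 :=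
    hdiag.trans (diagonal_eq_smul_one_of_commute_weightedShift hγ (hdiag ▸ hMγ))
  refine ⟨M 0 0, ?_⟩
  rw [← toEuclideanCLM.apply_symm_apply B, ← map_one (toEuclideanCLM (𝕜 := 𝕜)), ← map_smul]
  exact congrArg _ hM

end Matrix

namespace OqH2

variable (q c : ℝ) (n : ℕ)

noncomputable def eigenvalue (k : Fin (n + 1)) : ℝ := c * q ^ (-(n : ℤ) + 2 * (k : ℤ))

/-- The central element `T` of `O_q(H(2))`; the other one is `D = c²`. -/
noncomputable def centralT : ℝ := c * (q ^ ((n : ℤ) + 1) + q ^ (-(n : ℤ) - 1))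

/-- `relPoly q` and `relPoly q⁻¹` are the right-hand sides `-D + qTz - q²z²` and
`-D + q⁻¹Tz - q⁻²z²` of the two quadratic relations, as functions of `z`. -/
noncomputable def relPoly (t x : ℝ) : ℝ := -c ^ 2 + t * (centralT q c n * x) - t ^ 2 * (x * x)

noncomputable def weight (k : Fin n) : ℝ := q * √(relPoly q c n q (eigenvalue q c n k.castSucc))

noncomputable abbrev zMatrix : Matrix (Fin (n + 1)) (Fin (n + 1)) ℂ :=
  diagonal fun k => (eigenvalue q c n k : ℂ)

noncomputable abbrev wMatrix : Matrix (Fin (n + 1)) (Fin (n + 1)) ℂ :=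
  weightedShift fun k => (weight q c n k : ℂ)

noncomputable abbrev zOp : EuclideanSpace ℂ (Fin (n + 1)) →L[ℂ] EuclideanSpace ℂ (Fin (n + 1)) :=
  toEuclideanCLM (𝕜 := ℂ) (zMatrix q c n)

noncomputable abbrev wOp : EuclideanSpace ℂ (Fin (n + 1)) →L[ℂ] EuclideanSpace ℂ (Fin (n + 1)) :=
  toEuclideanCLM (𝕜 := ℂ) (wMatrix q c n)

variable {q c n}

lemma ofReal_centralT :
    (centralT q c n : ℂ) = c * ((q : ℂ) ^ ((n : ℤ) + 1) + (q : ℂ) ^ (-(n : ℤ) - 1)) := by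
  push_cast [centralT]; ring

lemma relPoly_eq_mul (hq : q ≠ 0) (x : ℝ) :
    relPoly q c n q x = (q * x - c * q ^ ((n : ℤ) + 1)) * (c * q ^ (-(n : ℤ) - 1) - q * x) := by
  have h : q ^ ((n : ℤ) + 1) * q ^ (-(n : ℤ) - 1) = 1 := by
    rw [← zpow_add₀ hq]; simp
  unfold relPoly centralT
  linear_combination c ^ 2 * h

lemma relPoly_inv_mul_sq (x : ℝ) :
    relPoly q c n q⁻¹ (q ^ 2 * x) = relPoly q c n q x := by
  unfold relPoly
  field_simp

lemma mul_eigenvalue (hq : q ≠ 0) (k : Fin (n + 1)) :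
    q * eigenvalue q c n k = c * q ^ (-(n : ℤ) + 2 * k + 1) := by
  rw [eigenvalue, zpow_add_one₀ hq]; ring

lemma eigenvalue_succ (hq : q ≠ 0) (k : Fin n) :
    eigenvalue q c n k.succ = q ^ 2 * eigenvalue q c n k.castSucc := by
  simp only [eigenvalue, Fin.val_succ, Fin.val_castSucc]
  rw [show -(n : ℤ) + 2 * ((k : ℕ) + 1 : ℕ) = -(n : ℤ) + 2 * (k : ℕ) + 2 by push_cast; ring,
    zpow_add₀ hq]
  norm_cast; ring

lemma eigenvalue_injective (hq0 : 0 < q) (hq1 : q < 1) (hc : c ≠ 0) :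
    Function.Injective (eigenvalue q c n) := by
  intro i j h
  have := zpow_right_injective₀ hq0 hq1.ne (mul_left_cancel₀ hc h)
  exact Fin.ext (by omega)

lemma relPoly_eigenvalue_last (hq : q ≠ 0) :
    relPoly q c n q (eigenvalue q c n (Fin.last n)) = 0 := by
  rw [relPoly_eq_mul hq, mul_eigenvalue hq, Fin.val_last,
    show -(n : ℤ) + 2 * (n : ℕ) + 1 = n + 1 by ring, sub_self, zero_mul]

lemma relPoly_inv_eigenvalue_zero (hq : q ≠ 0) :
    relPoly q c n q⁻¹ (eigenvalue q c n 0) = 0 := by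
  have h : q * (eigenvalue q c n 0 / q ^ 2) = c * q ^ (-(n : ℤ) - 1) := by
    rw [eigenvalue, zpow_sub_one₀ hq]; field_simp; simp
  rw [← mul_div_cancel₀ (eigenvalue q c n 0) (pow_ne_zero 2 hq), relPoly_inv_mul_sq,
    relPoly_eq_mul hq, h, sub_self, mul_zero]

lemma relPoly_eigenvalue_castSucc_pos (hq0 : 0 < q) (hq1 : q < 1) (hc : c ≠ 0) (k : Fin n) :
    0 < relPoly q c n q (eigenvalue q c n k.castSucc) := by
  rw [relPoly_eq_mul hq0.ne', mul_eigenvalue hq0.ne', Fin.val_castSucc]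
  have hk := k.isLt
  have h₁ : q ^ ((n : ℤ) + 1) < q ^ (-(n : ℤ) + 2 * (k : ℕ) + 1) :=
    zpow_lt_zpow_right_of_lt_one₀ hq0 hq1 (by omega)
  have h₂ : q ^ (-(n : ℤ) + 2 * (k : ℕ) + 1) < q ^ (-(n : ℤ) - 1) :=
    zpow_lt_zpow_right_of_lt_one₀ hq0 hq1 (by omega)
  have hc2 : 0 < c ^ 2 := by positivity
  calc 0 < c ^ 2 * ((q ^ (-(n : ℤ) + 2 * (k : ℕ) + 1) - q ^ ((n : ℤ) + 1)) *
        (q ^ (-(n : ℤ) - 1) - q ^ (-(n : ℤ) + 2 * (k : ℕ) + 1))) :=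
        mul_pos hc2 (mul_pos (sub_pos.2 h₁) (sub_pos.2 h₂))
    _ = _ := by ring

lemma weight_pos (hq0 : 0 < q) (hq1 : q < 1) (hc : c ≠ 0) (k : Fin n) : 0 < weight q c n k :=
  mul_pos hq0 (Real.sqrt_pos.2 (relPoly_eigenvalue_castSucc_pos hq0 hq1 hc k))

lemma weight_sq (hq0 : 0 < q) (hq1 : q < 1) (hc : c ≠ 0) (k : Fin n) :
    weight q c n k ^ 2 = q ^ 2 * relPoly q c n q (eigenvalue q c n k.castSucc) := by
  rw [weight, mul_pow, Real.sq_sqrt (relPoly_eigenvalue_castSucc_pos hq0 hq1 hc k).le]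

lemma zMatrix_mul_wMatrix (hq : q ≠ 0) :
    zMatrix q c n * wMatrix q c n = (q : ℂ) ^ 2 • (wMatrix q c n * zMatrix q c n) :=
  diagonal_mul_weightedShift fun k => by simp [eigenvalue_succ hq]

lemma conjTranspose_wMatrix_mul_self (hq0 : 0 < q) (hq1 : q < 1) (hc : c ≠ 0) :
    (wMatrix q c n)ᴴ * wMatrix q c n =
      diagonal fun k => ((q ^ 2 * relPoly q c n q (eigenvalue q c n k) : ℝ) : ℂ) := by
  refine conjTranspose_weightedShift_mul_self (by simp [relPoly_eigenvalue_last hq0.ne'])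
    fun k => ?_
  rw [← weight_sq hq0 hq1 hc]
  simp [sq]

lemma wMatrix_mul_conjTranspose_self (hq0 : 0 < q) (hq1 : q < 1) (hc : c ≠ 0) :
    wMatrix q c n * (wMatrix q c n)ᴴ =
      diagonal fun k => ((q ^ 2 * relPoly q c n q⁻¹ (eigenvalue q c n k) : ℝ) : ℂ) := by
  refine weightedShift_mul_conjTranspose_self (by simp [relPoly_inv_eigenvalue_zero hq0.ne'])
    fun k => ?_
  rw [eigenvalue_succ hq0.ne', relPoly_inv_mul_sq, ← weight_sq hq0 hq1 hc]
  simp [sq]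

lemma inv_sq_smul_diagonal_relPoly (hq : q ≠ 0) (t : ℝ) (x : Fin (n + 1) → ℝ) :
    ((q : ℂ) ^ 2)⁻¹ • diagonal (fun k => ((q ^ 2 * relPoly q c n t (x k) : ℝ) : ℂ)) =
      -((c : ℂ) ^ 2 • 1) + (t : ℂ) • ((centralT q c n : ℂ) • diagonal fun k => (x k : ℂ)) -
        (t : ℂ) ^ 2 • ((diagonal fun k => (x k : ℂ)) * diagonal fun k => (x k : ℂ)) := by
  ext i j
  rcases eq_or_ne i j with rfl | hij
  · have hq' : (q : ℂ) ≠ 0 := by exact_mod_cast hq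
    simp only [Matrix.smul_apply, Matrix.add_apply, Matrix.sub_apply, Matrix.neg_apply,
      diagonal_mul_diagonal,
      diagonal_apply_eq, one_apply_eq, smul_eq_mul, relPoly]
    push_cast
    field_simp
  · simp [hij]

lemma zOp_single (k : Fin (n + 1)) :
    zOp q c n (EuclideanSpace.single k 1) =
      ((c : ℂ) * (q : ℂ) ^ (-(n : ℤ) + 2 * (k : ℤ))) • EuclideanSpace.single k 1 := by
  rw [toEuclideanCLM_diagonal_single]
  simp [eigenvalue]

lemma isSelfAdjoint_zOp : IsSelfAdjoint (zOp q c n) :=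
  IsSelfAdjoint.map (show IsSelfAdjoint (zMatrix q c n) from
    isHermitian_diagonal_iff.2 fun k => by simp [IsSelfAdjoint]) _

lemma adjoint_wOp :
    ContinuousLinearMap.adjoint (wOp q c n) = toEuclideanCLM (𝕜 := ℂ) (wMatrix q c n)ᴴ := by
  rw [← ContinuousLinearMap.star_eq_adjoint, ← map_star, star_eq_conjTranspose]

lemma adjoint_wOp_single_zero :
    ContinuousLinearMap.adjoint (wOp q c n) (EuclideanSpace.single 0 1) = 0 := by
  rw [adjoint_wOp, toEuclideanCLM_apply_single, conjTranspose_weightedShift_mulVec_single_zero,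
    WithLp.toLp_zero]

lemma zOp_mul_wOp (hq : q ≠ 0) : zOp q c n * wOp q c n = (q : ℂ) ^ 2 • (wOp q c n * zOp q c n) := by
  rw [← map_mul, ← map_mul, ← map_smul, zMatrix_mul_wMatrix hq]

lemma adjoint_wOp_mul_zOp (hq : q ≠ 0) :
    ContinuousLinearMap.adjoint (wOp q c n) * zOp q c n =
      (q : ℂ) ^ 2 • (zOp q c n * ContinuousLinearMap.adjoint (wOp q c n)) := by
  simpa [star_mul, star_smul, isSelfAdjoint_zOp.star_eq,
    ContinuousLinearMap.star_eq_adjoint] using congrArg star (zOp_mul_wOp (c := c) (n := n) hq)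

lemma inv_sq_smul_toEuclideanCLM_diagonal_relPoly (hq : q ≠ 0) (t : ℝ) :
    ((q : ℂ) ^ 2)⁻¹ • toEuclideanCLM (𝕜 := ℂ)
        (diagonal fun k => ((q ^ 2 * relPoly q c n t (eigenvalue q c n k) : ℝ) : ℂ)) =
      -((c : ℂ) ^ 2 • 1) + (t : ℂ) • ((centralT q c n : ℂ) • zOp q c n) -
        (t : ℂ) ^ 2 • (zOp q c n * zOp q c n) := by
  simpa only [map_add, map_sub, map_neg, map_smul, map_mul, map_one] using
    congrArg (toEuclideanCLM (𝕜 := ℂ))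
      (inv_sq_smul_diagonal_relPoly (c := c) (n := n) hq t (eigenvalue q c n))

lemma inv_sq_smul_adjoint_wOp_mul_wOp (hq0 : 0 < q) (hq1 : q < 1) (hc : c ≠ 0) :
    ((q : ℂ) ^ 2)⁻¹ • (ContinuousLinearMap.adjoint (wOp q c n) * wOp q c n) =
      -((c : ℂ) ^ 2 • 1) + (q : ℂ) • ((centralT q c n : ℂ) • zOp q c n) -
        (q : ℂ) ^ 2 • (zOp q c n * zOp q c n) := by
  rw [adjoint_wOp, ← map_mul, conjTranspose_wMatrix_mul_self hq0 hq1 hc,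
    inv_sq_smul_toEuclideanCLM_diagonal_relPoly hq0.ne']

lemma inv_sq_smul_wOp_mul_adjoint_wOp (hq0 : 0 < q) (hq1 : q < 1) (hc : c ≠ 0) :
    ((q : ℂ) ^ 2)⁻¹ • (wOp q c n * ContinuousLinearMap.adjoint (wOp q c n)) =
      -((c : ℂ) ^ 2 • 1) + (q : ℂ)⁻¹ • ((centralT q c n : ℂ) • zOp q c n) -
        ((q : ℂ) ^ 2)⁻¹ • (zOp q c n * zOp q c n) := by
  rw [adjoint_wOp, ← map_mul, wMatrix_mul_conjTranspose_self hq0 hq1 hc,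
    inv_sq_smul_toEuclideanCLM_diagonal_relPoly hq0.ne', Complex.ofReal_inv, inv_pow]

lemma exists_eq_smul_one_of_commute_zOp_wOp (hq0 : 0 < q) (hq1 : q < 1) (hc : c ≠ 0)
    {B : EuclideanSpace ℂ (Fin (n + 1)) →L[ℂ] EuclideanSpace ℂ (Fin (n + 1))}
    (hBz : Commute B (zOp q c n)) (hBw : Commute B (wOp q c n)) : ∃ μ : ℂ, B = μ • 1 :=
  exists_eq_smul_one_of_commute_toEuclideanCLM
    (fun _ _ h => eigenvalue_injective hq0 hq1 hc (Complex.ofReal_injective h))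
    (fun k => Complex.ofReal_ne_zero.2 (weight_pos hq0 hq1 hc k).ne') hBz hBw

end OqH2

open OqH2

/-- For `0 < q < 1`, `c ∈ ℝ^×`, `n ∈ ℤ≥0` there exist bounded operators `z`, `w`
(with `v = w*`) on `ℂ^{n+1}` with `z e_k = c q^{-n+2k} e_k`, `v e_0 = 0`, satisfying the
defining relations of `O_q(H(2))` with `T = c(q^{n+1} + q^{-n-1})` and `D = c²`, and
with trivial commutant (so this defines an irreducible `*`-representation). -/
theorem OqH2_finite_dim_irrep_exists (q c : ℝ) (hq0 : 0 < q) (hq1 : q < 1)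
    (hc : c ≠ 0) (n : ℕ) :
    ∃ z w : EuclideanSpace ℂ (Fin (n + 1)) →L[ℂ] EuclideanSpace ℂ (Fin (n + 1)),
      (∀ k : Fin (n + 1),
        z (EuclideanSpace.single k 1)
          = ((c : ℂ) * (q : ℂ) ^ (-(n : ℤ) + 2 * (k : ℤ))) • EuclideanSpace.single k 1) ∧
      IsSelfAdjoint z ∧
      (ContinuousLinearMap.adjoint w) (EuclideanSpace.single (0 : Fin (n + 1)) 1) = 0 ∧
      z * w = ((q : ℂ) ^ 2) • (w * z) ∧
      (ContinuousLinearMap.adjoint w) * z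
        = ((q : ℂ) ^ 2) • (z * ContinuousLinearMap.adjoint w) ∧
      (((q : ℂ) ^ 2)⁻¹) • ((ContinuousLinearMap.adjoint w) * w)
        = -(((c : ℂ) ^ 2) • (1 : EuclideanSpace ℂ (Fin (n + 1)) →L[ℂ] EuclideanSpace ℂ (Fin (n + 1))))
          + (q : ℂ) • (((c : ℂ) * ((q : ℂ) ^ ((n : ℤ) + 1) + (q : ℂ) ^ (-(n : ℤ) - 1))) • z)
          - ((q : ℂ) ^ 2) • (z * z) ∧
      (((q : ℂ) ^ 2)⁻¹) • (w * ContinuousLinearMap.adjoint w)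
        = -(((c : ℂ) ^ 2) • (1 : EuclideanSpace ℂ (Fin (n + 1)) →L[ℂ] EuclideanSpace ℂ (Fin (n + 1))))
          + ((q : ℂ)⁻¹) • (((c : ℂ) * ((q : ℂ) ^ ((n : ℤ) + 1) + (q : ℂ) ^ (-(n : ℤ) - 1))) • z)
          - (((q : ℂ) ^ 2)⁻¹) • (z * z) ∧
      (∀ B : EuclideanSpace ℂ (Fin (n + 1)) →L[ℂ] EuclideanSpace ℂ (Fin (n + 1)),
        Commute B z → Commute B w → Commute B (ContinuousLinearMap.adjoint w) →
        ∃ μ : ℂ, B = μ • 1) := by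
  refine ⟨zOp q c n, wOp q c n, zOp_single, isSelfAdjoint_zOp,
    adjoint_wOp_single_zero, zOp_mul_wOp hq0.ne', adjoint_wOp_mul_zOp hq0.ne', ?_, ?_,
    fun B hBz hBw _ => exists_eq_smul_one_of_commute_zOp_wOp hq0 hq1 hc hBz hBw⟩
  · rw [← ofReal_centralT]; exact inv_sq_smul_adjoint_wOp_mul_wOp hq0 hq1 hc
  · rw [← ofReal_centralT]; exact inv_sq_smul_wOp_mul_adjoint_wOp hq0 hq1 hc
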